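/- Let κ be a regular uncountable cardinal and give the ordinal space κ+1 (the set of ordinals ≤ κ) the order topology. Then Nt(κ+1) = κ^+; that is, κ+1 has a (κ^+)^op-like base but no κ^op-like base. -/

import Mathlib

open Cardinal Set TopologicalSpace

universe u

/-- A family `B` of subsets of a space is `κ`-op-like if every member of `B`
has fewer than `κ`-many supersets in `B`. -/
def OpLike {X : Type u} (κ : Cardinal.{u}) (B : Set (Set X)) : Prop :=
  ∀ U ∈ B, #{V ∈ B | U ⊆ V} < κ

/-- The Noetherian type of a space: the least infinite `κ` such that the space
has a `κ`-op-like base. -/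
noncomputable def NoetherianType (X : Type u) [TopologicalSpace X] : Cardinal.{u} :=
  sInf {κ : Cardinal.{u} | ℵ₀ ≤ κ ∧ ∃ B : Set (Set X), IsTopologicalBasis B ∧ OpLike κ B}

/-- The weight of a space: the least infinite `κ` such that the space has
a base of cardinality at most `κ`. -/
noncomputable def Weight (X : Type u) [TopologicalSpace X] : Cardinal.{u} :=
  sInf {κ : Cardinal.{u} | ℵ₀ ≤ κ ∧ ∃ B : Set (Set X), IsTopologicalBasis B ∧ #B ≤ κ}

/-- A π-base: a family of nonempty open sets such that every nonempty open set
contains a member of the family. -/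
def IsPiBase {X : Type u} [TopologicalSpace X] (B : Set (Set X)) : Prop :=
  (∀ U ∈ B, IsOpen U ∧ U.Nonempty) ∧
    ∀ U : Set X, IsOpen U → U.Nonempty → ∃ V ∈ B, V ⊆ U

/-- The π-weight of a space: the least infinite `κ` such that the space has
a π-base of cardinality at most `κ`. -/
noncomputable def PiWeight (X : Type u) [TopologicalSpace X] : Cardinal.{u} :=
  sInf {κ : Cardinal.{u} | ℵ₀ ≤ κ ∧ ∃ B : Set (Set X), IsPiBase B ∧ #B ≤ κ}

/-- The density of a space: the least infinite `κ` such that the space has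
a dense subset of cardinality at most `κ`. -/
noncomputable def Density (X : Type u) [TopologicalSpace X] : Cardinal.{u} :=
  sInf {κ : Cardinal.{u} | ℵ₀ ≤ κ ∧ ∃ D : Set X, Dense D ∧ #D ≤ κ}

/-- A GO-space: a linearly ordered set whose topology is induced by an order
embedding into some linearly ordered topological space (a linear order with
its order topology). -/
def IsGOSpace (X : Type u) [LinearOrder X] [tX : TopologicalSpace X] : Prop :=
  ∃ (Y : Type u) (lo : LinearOrder Y) (e : X → Y),
    @StrictMono X Y _ lo.toPartialOrder.toPreorder e ∧
    tX = TopologicalSpace.induced e (@Preorder.topology Y lo.toPartialOrder.toPreorder)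

/-- A space is `μ`-compact if every open cover has a subcover of cardinality
less than `μ`. -/
def MuCompact (μ : Cardinal.{u}) (X : Type u) [TopologicalSpace X] : Prop :=
  ∀ 𝒰 : Set (Set X), (∀ U ∈ 𝒰, IsOpen U) → ⋃₀ 𝒰 = Set.univ →
    ∃ 𝒱 ⊆ 𝒰, #𝒱 < μ ∧ ⋃₀ 𝒱 = Set.univ

/-- A cardinal is weakly inaccessible if it is uncountable, regular, and
a limit cardinal. -/
def IsWeaklyInaccessible (κ : Cardinal.{u}) : Prop :=
  ℵ₀ < κ ∧ κ.IsRegular ∧ ∀ μ < κ, Order.succ μ < κ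

/-- The ordinal space `κ + 1`: the linear order of all ordinals `≤ κ`,
realized as the order type `κ.ord + 1`, with its order topology. -/
noncomputable instance (o : Ordinal.{u}) : TopologicalSpace o.ToType :=
  Preorder.topology o.ToType

instance (o : Ordinal.{u}) : OrderTopology o.ToType := ⟨rfl⟩

/-!
The intervals `(a, b]` and `[0, b]` form a base of `κ + 1` of size `κ`, which is trivially
`κ⁺`-op-like.

For the lower bound, let `B` be a base of a well-ordered space and let `t` be a point of
cofinality `κ > ℵ₀` (here `t = κ`). Each `x < t` has a basic neighbourhood `U x ⊆ [0, x]`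
containing an interval `(g x, x]` with `g x < x`. A pressing-down argument (countable subsets of
`[0, t)` are bounded) gives a `γ` with `g x ≤ γ` for cofinally many `x`. Every basic `W` with
`γ < y ∈ W ⊆ (γ, y]` then lies in all of these `U x`, and they are pairwise distinct because
`x` is the largest element of `U x`. So `W` has `κ` supersets in `B`.
-/

section OpLike

variable {X : Type u} {κ : Cardinal.{u}} {B : Set (Set X)}

theorem OpLike.mono {μ : Cardinal.{u}} (h : OpLike κ B) (hκμ : κ ≤ μ) : OpLike μ B :=
  fun U hU => (h U hU).trans_le hκμ

theorem opLike_succ_of_mk_le (hB : #B ≤ κ) : OpLike (Order.succ κ) B :=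
  fun _ _ => ((mk_le_mk_of_subset (sep_subset _ _)).trans hB).trans_lt (Order.lt_succ κ)

variable [TopologicalSpace X]

theorem noetherianType_eq_succ (hκ : ℵ₀ ≤ κ)
    (hsucc : ∃ B : Set (Set X), IsTopologicalBasis B ∧ OpLike (Order.succ κ) B)
    (hnot : ¬ ∃ B : Set (Set X), IsTopologicalBasis B ∧ OpLike κ B) :
    NoetherianType X = Order.succ κ := by
  obtain ⟨B, hB, hop⟩ := hsucc
  refine le_antisymm (csInf_le' ⟨hκ.trans (Order.le_succ κ), B, hB, hop⟩) ?_
  refine le_csInf ⟨_, hκ.trans (Order.le_succ κ), B, hB, hop⟩ ?_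
  rintro μ ⟨-, B', hB', hop'⟩
  by_contra! hμ
  exact hnot ⟨B', hB', hop'.mono (Order.lt_succ_iff.1 hμ)⟩

theorem exists_isTopologicalBasis_opLike_subtype (hB : IsTopologicalBasis B) (hop : OpLike κ B)
    {Y : Set X} (hY : IsOpen Y) : ∃ B' : Set (Set Y), IsTopologicalBasis B' ∧ OpLike κ B' := by
  refine ⟨preimage (↑) '' {U ∈ B | U ⊆ Y}, isTopologicalBasis_of_isOpen_of_nhds ?_ ?_, ?_⟩
  · rintro _ ⟨U, ⟨hU, -⟩, rfl⟩
    exact (hB.isOpen hU).preimage continuous_subtype_val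
  · intro y u hy hu
    obtain ⟨U, hU, hyU, hUu⟩ :=
      hB.exists_subset_of_mem_open (mem_image_of_mem _ hy) (hY.isOpenMap_subtype_val u hu)
    refine ⟨_, ⟨U, ⟨hU, hUu.trans (image_subset_range _ _ |>.trans Subtype.range_val.le)⟩, rfl⟩,
      hyU, ?_⟩
    simpa [preimage_image_eq _ Subtype.val_injective] using preimage_mono (f := ((↑) : Y → X)) hUu
  · rintro _ ⟨W, ⟨hW, hWY⟩, rfl⟩
    refine lt_of_le_of_lt ?_ (hop W hW)
    refine (mk_le_mk_of_subset ?_).trans (mk_image_le (f := preimage ((↑) : Y → X)))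
    rintro _ ⟨⟨V, ⟨hV, hVY⟩, rfl⟩, hWV⟩
    refine ⟨V, ⟨hV, ?_⟩, rfl⟩
    rwa [Subtype.preimage_val_subset_preimage_val_iff, inter_eq_right.2 hWY,
      inter_eq_right.2 hVY] at hWV

end OpLike

theorem TopologicalSpace.IsTopologicalBasis.exists_Ioc_subset_subset_Iic {X : Type u}
    [LinearOrder X] [TopologicalSpace X] [OrderTopology X] {B : Set (Set X)}
    (hB : IsTopologicalBasis B) {x : X} (hx : IsOpen (Iic x)) (hl : ∃ l, l < x) :
    ∃ U ∈ B, ∃ l < x, Ioc l x ⊆ U ∧ U ⊆ Iic x := by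
  obtain ⟨U, hU, hxU, hUx⟩ := hB.exists_subset_of_mem_open self_mem_Iic hx
  obtain ⟨l, hlx, hlU⟩ := exists_Ioc_subset_of_mem_nhds ((hB.isOpen hU).mem_nhds hxU) hl
  exact ⟨U, hU, l, hlx, hlU, hUx⟩

theorem noMaxOrder_of_one_lt_cof {α : Type u} [LinearOrder α] (hα : 1 < Order.cof α) :
    NoMaxOrder α := by
  have : Nonempty α := Order.cof_ne_zero_iff.1 (zero_lt_one.trans hα).ne'
  rwa [← noTopOrder_iff_noMaxOrder, ← Order.one_lt_cof_iff]

section WellOrder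

variable {α : Type u} [LinearOrder α] [WellFoundedLT α]

theorem exists_isCofinal_preimage_Iic_of_regressive (hα : ℵ₀ < Order.cof α) (g : α → α)
    (hg : ∀ x, ¬IsMin x → g x < x) : ∃ γ, IsCofinal (g ⁻¹' Iic γ) := by
  have := noMaxOrder_of_one_lt_cof (one_lt_aleph0.trans hα)
  have : Nonempty α := Order.cof_ne_zero_iff.1 (aleph0_pos.trans hα).ne'
  obtain ⟨x₀, hx₀⟩ := exists_gt (Classical.arbitrary α)
  let _ := WellFoundedLT.toOrderBot α
  let _ := WellFoundedLT.conditionallyCompleteLinearOrderBot α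
  by_contra! h
  simp only [not_isCofinal_iff] at h
  choose H hH using h
  -- `x < H γ` whenever `g x ≤ γ`. The supremum `s` of the iterates `c n` of `H` is not minimal,
  -- so `g s < c n` for some `n`, and then `s < H (c n) = c (n + 1)`.
  set c : ℕ → α := fun n => H^[n] x₀
  have hc : BddAbove (range c) := .of_not_isCofinal fun hc =>
    (Order.cof_le hc).not_gt (hα.trans_le' (mk_le_aleph0_iff.2 (countable_range c).to_subtype))
  obtain ⟨n, hn⟩ := exists_lt_of_lt_ciSup (hg (⨆ n, c n) fun hmin =>
    not_isMin_of_lt hx₀ (hmin.mono (le_ciSup hc 0)))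
  refine (le_ciSup hc (n + 1)).not_gt ?_
  simpa only [c, Function.iterate_succ_apply'] using hH (c n) _ hn.le

variable [TopologicalSpace α] [OrderTopology α]

theorem isOpen_Iic_of_wellFoundedLT (x : α) : IsOpen (Iic x) := by
  let _ := SuccOrder.ofLinearWellFoundedLT α
  by_cases hx : IsMax x
  · rw [show Iic x = Set.univ from eq_univ_of_forall hx.isTop]
    exact isOpen_univ
  · rw [← Order.Iio_succ_of_not_isMax hx]
    exact isOpen_Iio

theorem exists_isTopologicalBasis_mk_le_of_wellFoundedLT [Infinite α] :
    ∃ B : Set (Set α), IsTopologicalBasis B ∧ #B ≤ #α := by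
  refine ⟨range Iic ∪ range (fun p : α × α => Ioc p.1 p.2),
    isTopologicalBasis_of_isOpen_of_nhds ?_ ?_, ?_⟩
  · rintro _ (⟨b, rfl⟩ | ⟨⟨a, b⟩, rfl⟩)
    · exact isOpen_Iic_of_wellFoundedLT b
    · exact isOpen_Ioi.inter (isOpen_Iic_of_wellFoundedLT b)
  · intro x u hx hu
    by_cases hmin : IsMin x
    · exact ⟨Iic x, .inl ⟨x, rfl⟩, self_mem_Iic, fun y hy => hmin.eq_of_le hy ▸ hx⟩
    · obtain ⟨l, hl, hlu⟩ := exists_Ioc_subset_of_mem_nhds (hu.mem_nhds hx) (not_isMin_iff.1 hmin)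
      exact ⟨Ioc l x, .inr ⟨(l, x), rfl⟩, right_mem_Ioc.2 hl, hlu⟩
  · calc #↑(range Iic ∪ range (fun p : α × α => Ioc p.1 p.2))
        ≤ #α + #(α × α) := (mk_union_le _ _).trans (add_le_add mk_range_le mk_range_le)
      _ = #α := by
        rw [mk_prod, lift_id, mul_eq_self (aleph0_le_mk α), add_eq_self (aleph0_le_mk α)]

theorem TopologicalSpace.IsTopologicalBasis.not_opLike_cof (hα : ℵ₀ < Order.cof α)
    {B : Set (Set α)} (hB : IsTopologicalBasis B) : ¬ OpLike (Order.cof α) B := by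
  intro hop
  have := noMaxOrder_of_one_lt_cof (one_lt_aleph0.trans hα)
  choose! U hUB g hgx hgU hUx using fun x (hx : ¬IsMin x) =>
    hB.exists_Ioc_subset_subset_Iic (isOpen_Iic_of_wellFoundedLT x) (not_isMin_iff.1 hx)
  obtain ⟨γ, hγ⟩ := exists_isCofinal_preimage_Iic_of_regressive hα g hgx
  obtain ⟨y, hγy⟩ := exists_gt γ
  obtain ⟨W, hW, -, hWy⟩ := hB.exists_subset_of_mem_open (right_mem_Ioc.2 hγy)
    (isOpen_Ioi.inter (isOpen_Iic_of_wellFoundedLT y))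
  set T := g ⁻¹' Iic γ ∩ Ici y
  have hT : IsCofinal T := fun a =>
    let ⟨b, hb, hab⟩ := hγ (max a y)
    ⟨b, ⟨hb, le_of_max_le_right hab⟩, le_of_max_le_left hab⟩
  have hTmin : ∀ x ∈ T, ¬IsMin x := fun x hx => not_isMin_of_lt (hγy.trans_le hx.2)
  have hmem : ∀ x ∈ T, x ∈ U x := fun x hx =>
    hgU x (hTmin x hx) (right_mem_Ioc.2 (hgx x (hTmin x hx)))
  have hinj : InjOn U T := fun x hx x' hx' h => le_antisymm
    (hUx x' (hTmin x' hx') (h ▸ hmem x hx)) (hUx x (hTmin x hx) (h ▸ hmem x' hx'))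
  have hmaps : MapsTo U T {V ∈ B | W ⊆ V} := fun x hx =>
    ⟨hUB x (hTmin x hx), hWy.trans ((Ioc_subset_Ioc hx.1 hx.2).trans (hgU x (hTmin x hx)))⟩
  refine (hop W hW).not_ge ((Order.cof_le hT).trans ?_)
  rw [← mk_image_eq_of_injOn U T hinj]
  exact mk_le_mk_of_subset hmaps.image_subset

theorem TopologicalSpace.IsTopologicalBasis.not_opLike_cof_Iio {t : α}
    (ht : ℵ₀ < Order.cof (Iio t)) {B : Set (Set α)} (hB : IsTopologicalBasis B) :
    ¬ OpLike (Order.cof (Iio t)) B := fun hop =>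
  let ⟨_, hB', hop'⟩ := exists_isTopologicalBasis_opLike_subtype hB hop isOpen_Iio
  hB'.not_opLike_cof ht hop'

end WellOrder

theorem cof_Iio_top_toType_succ (o : Ordinal.{u}) :
    Order.cof (Iio (⊤ : (Order.succ o).ToType)) = o.cof := by
  rw [Order.cof_Iio, ← Ordinal.enum_succ_eq_top]
  exact congrArg Ordinal.cof (Ordinal.typein_enum _ _)

/-- If `κ` is a regular uncountable cardinal, then the ordinal space `κ + 1`
has Noetherian type `κ⁺`: it has a `κ⁺`-op-like base but no `κ`-op-like base. -/
theorem statement11 (κ : Cardinal.{u}) (hreg : κ.IsRegular) (hunc : ℵ₀ < κ) :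
    NoetherianType (Order.succ κ.ord).ToType = Order.succ κ ∧
    (∃ B : Set (Set (Order.succ κ.ord).ToType),
      IsTopologicalBasis B ∧ OpLike (Order.succ κ) B) ∧
    ¬ ∃ B : Set (Set (Order.succ κ.ord).ToType), IsTopologicalBasis B ∧ OpLike κ B := by
  have hcard : #(Order.succ κ.ord).ToType = κ := by
    rw [mk_toType, Order.succ_eq_add_one, Ordinal.card_add_one, card_ord,
      add_one_of_aleph0_le hreg.aleph0_le]
  have hcof : Order.cof (Iio (⊤ : (Order.succ κ.ord).ToType)) = κ := by
    rw [cof_Iio_top_toType_succ, hreg.cof_ord]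
  have : Infinite (Order.succ κ.ord).ToType := infinite_iff.2 (hcard.symm ▸ hreg.aleph0_le)
  obtain ⟨B, hB, hBcard⟩ :=
    exists_isTopologicalBasis_mk_le_of_wellFoundedLT (α := (Order.succ κ.ord).ToType)
  have hup : ∃ B : Set (Set (Order.succ κ.ord).ToType),
      IsTopologicalBasis B ∧ OpLike (Order.succ κ) B :=
    ⟨B, hB, opLike_succ_of_mk_le (hBcard.trans hcard.le)⟩
  have hlow : ¬ ∃ B : Set (Set (Order.succ κ.ord).ToType), IsTopologicalBasis B ∧ OpLike κ B :=
    fun ⟨B, hB, hop⟩ => hB.not_opLike_cof_Iio (hcof.symm ▸ hunc) (hcof.symm ▸ hop)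
  exact ⟨noetherianType_eq_succ hreg.aleph0_le hup hlow, hup, hlow⟩
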